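/- Let ε > 0 and let (λ_ε, u_ε) be an eigenpair of the ε-perturbed problem with ‖u_ε‖_X = 1 and λ_ε ≤ λ⁽²⁾. Define α := ⟨u_ε, u_0⟩_X, η := u_ε − α u_0, and β := a(η, u_0) / a(u_0, u_0). Then ‖η‖_X² ≤ α β. -/

import Mathlib

/-!
Write `u_ε = η + α u₀` with `η ⊥ u₀` and `ξ = η − β u₀`, so that `a(ξ, u₀) = 0`; since `u₀` is an
eigenvector, `β` is also the `b`-coefficient of `η` along `u₀`. Testing the perturbed equation with
`u₀` gives `ε α = (λ_ε − λ₀)(α + β) b(u₀, u₀)`, and testing it with `η` gives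
`ε ‖η‖² = λ_ε b(η, η) − a(η, η) + α β (λ_ε − λ₀) b(u₀, u₀)`. The spectral gap applied to `ξ`
bounds `λ_ε b(η, η) − a(η, η)` by `β² (λ_ε − λ₀) b(u₀, u₀)`, and the two identities combine to
`ε ‖η‖² ≤ β · ε α`.
-/

open scoped RealInnerProductSpace

theorem inner_sub_inner_smul_self_eq_zero {X : Type*} [NormedAddCommGroup X]
    [InnerProductSpace ℝ X] {u : X} (hu : ‖u‖ = 1) (v : X) : ⟪v - ⟪v, u⟫ • u, u⟫ = 0 := by
  rw [inner_sub_left, real_inner_smul_left, real_inner_self_eq_norm_sq, hu]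
  ring

theorem LinearMap.apply_sub_smul_sub_smul {R M : Type*} [CommRing R] [AddCommGroup M]
    [Module R M] {B : M →ₗ[R] M →ₗ[R] R} (hB : ∀ u v, B u v = B v u) (x y : M) (c : R) :
    B (x - c • y) (x - c • y) = B x x - 2 * c * B x y + c ^ 2 * B y y := by
  simp only [map_sub, map_smul, LinearMap.sub_apply, LinearMap.smul_apply, smul_eq_mul, hB y x]
  ring

section Eigenvector

variable {X : Type*} [AddCommGroup X] [Module ℝ X] {a b : X →ₗ[ℝ] X →ₗ[ℝ] ℝ} {lam0 : ℝ} {u0 : X}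

theorem apply_eigenvector_right (ha_symm : ∀ u v, a u v = a v u) (hb_symm : ∀ u v, b u v = b v u)
    (h_eig0 : ∀ φ, a u0 φ = lam0 * b u0 φ) (v : X) : a v u0 = lam0 * b v u0 := by
  rw [ha_symm, h_eig0, hb_symm]

theorem sq_mul_le_of_spectral_gap (ha_symm : ∀ u v, a u v = a v u)
    (hb_symm : ∀ u v, b u v = b v u) (hb_nonneg : ∀ u, 0 ≤ b u u)
    (h_eig0 : ∀ φ, a u0 φ = lam0 * b u0 φ) {lam2 μ : ℝ}
    (h_gap : ∀ ξ, a ξ u0 = 0 → lam2 * b ξ ξ ≤ a ξ ξ) (hμ : μ ≤ lam2) {η : X} {β : ℝ}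
    (hβ : b η u0 = β * b u0 u0) :
    (lam0 - μ) * β ^ 2 * b u0 u0 ≤ a η η - μ * b η η := by
  have haβ : a η u0 = β * a u0 u0 := by
    rw [apply_eigenvector_right ha_symm hb_symm h_eig0, hβ, h_eig0]
    ring
  have hξ_perp : a (η - β • u0) u0 = 0 := by
    rw [map_sub, LinearMap.sub_apply, map_smul, LinearMap.smul_apply, smul_eq_mul, haβ, sub_self]
  have hξ : μ * b (η - β • u0) (η - β • u0) ≤ a (η - β • u0) (η - β • u0) :=
    (mul_le_mul_of_nonneg_right hμ (hb_nonneg _)).trans (h_gap _ hξ_perp)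
  rw [LinearMap.apply_sub_smul_sub_smul ha_symm, LinearMap.apply_sub_smul_sub_smul hb_symm,
    haβ, hβ, h_eig0] at hξ
  linarith

end Eigenvector

theorem perturbed_eigen_eq_of_decomposition {X : Type*} [NormedAddCommGroup X]
    [InnerProductSpace ℝ X] {a b : X →ₗ[ℝ] X →ₗ[ℝ] ℝ} {lam0 ε μ α : ℝ} {u0 uε η : X}
    (h_eig0 : ∀ φ, a u0 φ = lam0 * b u0 φ)
    (h_pair : ∀ φ, ε * ⟪uε, φ⟫ + a uε φ = μ * b uε φ) (huε : uε = η + α • u0) (φ : X) :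
    ε * ⟪uε, φ⟫ + a η φ - μ * b η φ = α * (μ - lam0) * b u0 φ := by
  have h := h_pair φ
  rw [huε, map_add, map_smul, LinearMap.add_apply, LinearMap.smul_apply, smul_eq_mul, map_add,
    map_smul, LinearMap.add_apply, LinearMap.smul_apply, smul_eq_mul, h_eig0, ← huε] at h
  linear_combination h

theorem perturbed_remainder_estimate_general
    {X : Type*} [NormedAddCommGroup X] [InnerProductSpace ℝ X]
    (a b : X →ₗ[ℝ] X →ₗ[ℝ] ℝ)
    (ha_symm : ∀ u v : X, a u v = a v u)
    (hb_symm : ∀ u v : X, b u v = b v u)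
    (hb_posdef : ∀ u : X, u ≠ 0 → 0 < b u u)
    (lam0 : ℝ) (hlam0 : 0 < lam0) (u0 : X) (hu0 : ‖u0‖ = 1)
    (h_eig0 : ∀ φ : X, a u0 φ = lam0 * b u0 φ)
    (lam2 : ℝ)
    (h_gap : ∀ ξ : X, a ξ u0 = 0 → lam2 * b ξ ξ ≤ a ξ ξ)
    (ε : ℝ) (hε : 0 < ε) (lamε : ℝ) (uε : X)
    (h_pair : ∀ φ : X, ε * ⟪uε, φ⟫ + a uε φ = lamε * b uε φ)
    (h_le : lamε ≤ lam2)
    (α : ℝ) (hα : α = ⟪uε, u0⟫)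
    (η : X) (hη : η = uε - α • u0)
    (β : ℝ) (hβ : β = a η u0 / a u0 u0) :
    ‖η‖ ^ 2 ≤ α * β := by
  have hb_nonneg (u : X) : 0 ≤ b u u := by
    rcases eq_or_ne u 0 with rfl | hu
    · simp
    · exact (hb_posdef u hu).le
  have hb0 : 0 < b u0 u0 := hb_posdef u0 (norm_ne_zero_iff.mp (by simp [hu0]))
  have hη_perp : ⟪η, u0⟫ = 0 := by rw [hη, hα]; exact inner_sub_inner_smul_self_eq_zero hu0 uε
  have huε : uε = η + α • u0 := by rw [hη, sub_add_cancel]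
  have hβb : b η u0 = β * b u0 u0 := by
    rw [hβ, h_eig0, apply_eigenvector_right ha_symm hb_symm h_eig0]
    field_simp
  have hgap := sq_mul_le_of_spectral_gap ha_symm hb_symm hb_nonneg h_eig0 h_gap h_le hβb
  have htest_u0 := perturbed_eigen_eq_of_decomposition h_eig0 h_pair huε u0
  have htest_η := perturbed_eigen_eq_of_decomposition h_eig0 h_pair huε η
  rw [← hα, apply_eigenvector_right ha_symm hb_symm h_eig0, hβb] at htest_u0
  rw [huε, inner_add_left, real_inner_smul_left, real_inner_comm η u0, hη_perp, mul_zero, add_zero,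
    real_inner_self_eq_norm_sq, hb_symm u0, hβb] at htest_η
  have hmain : ε * ‖η‖ ^ 2 ≤ ε * (α * β) := by
    linear_combination hgap + htest_η - β * htest_u0
  exact le_of_mul_le_mul_left hmain hε

/-- The estimate (2.39): for a normalized eigenpair `(λ_ε, u_ε)` of the ε-perturbed problem
with `λ_ε ≤ λ⁽²⁾`, writing `α = ⟪u_ε, u₀⟫_X`, `η = u_ε − α u₀` and
`β = a(η, u₀)/a(u₀, u₀)`, one has `‖η‖² ≤ α β`. -/
theorem perturbed_remainder_estimate
    {X : Type*} [NormedAddCommGroup X] [InnerProductSpace ℝ X] [CompleteSpace X]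
    (a b : X →ₗ[ℝ] X →ₗ[ℝ] ℝ)
    (ha_symm : ∀ u v : X, a u v = a v u)
    (hb_symm : ∀ u v : X, b u v = b v u)
    (ha_cont : Continuous fun p : X × X => a p.1 p.2)
    (hb_cont : Continuous fun p : X × X => b p.1 p.2)
    (ha_nonneg : ∀ u : X, 0 ≤ a u u)
    (hb_posdef : ∀ u : X, u ≠ 0 → 0 < b u u)
    (hb_compact : ∀ (v : ℕ → X) (w : X),
        (∀ φ : X, Filter.Tendsto (fun k => ⟪v k, φ⟫) Filter.atTop (nhds ⟪w, φ⟫)) →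
        Filter.Tendsto (fun k => b (v k - w) (v k - w)) Filter.atTop (nhds 0))
    (lam0 : ℝ) (hlam0 : 0 < lam0) (u0 : X) (hu0 : ‖u0‖ = 1)
    (h_eig0 : ∀ φ : X, a u0 φ = lam0 * b u0 φ)
    (h_rayleigh : ∀ u : X, lam0 * b u u ≤ a u u)
    (lam2 : ℝ) (hlam2 : lam0 < lam2)
    (h_gap : ∀ ξ : X, a ξ u0 = 0 → lam2 * b ξ ξ ≤ a ξ ξ)
    (ε : ℝ) (hε : 0 < ε) (lamε : ℝ) (uε : X) (huε : uε ≠ 0)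
    (h_pair : ∀ φ : X, ε * ⟪uε, φ⟫ + a uε φ = lamε * b uε φ)
    (h_norm : ‖uε‖ = 1) (h_le : lamε ≤ lam2)
    (α : ℝ) (hα : α = ⟪uε, u0⟫)
    (η : X) (hη : η = uε - α • u0)
    (β : ℝ) (hβ : β = a η u0 / a u0 u0) :
    ‖η‖ ^ 2 ≤ α * β :=
  perturbed_remainder_estimate_general a b ha_symm hb_symm hb_posdef lam0 hlam0 u0 hu0 h_eig0 lam2
    h_gap ε hε lamε uε h_pair h_le α hα η hη β hβ
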